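/- arXiv:2406.08210 — 5 statements merged into one kernel-verified Lean document; each statement's English description precedes it below -/
import Mathlib

section
/- Two graphs G¹ = (V¹, E¹, X) and G² = (V², E², X) are indistinguishable by the Weisfeiler-Leman test if they have the same multiset of node features and for any two nodes i, j ∈ V¹ ∪ V² with equal node features, the multisets of node features of their neighbors are equal. More precisely, under these conditions, at every iteration t of WL, any two nodes with equal features receive the same color, and the multisets of colors over G¹ and G² coincide. -/
/-- The type of Weisfeiler-Leman colors after `t` iterations, starting from features in `F`.
The injective hash function is modeled by pairing: a color at iteration `t+1` is the pair of
the previous color and the multiset of the previous colors of the neighbors. -/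
def WLColor (F : Type*) : ℕ → Type _
  | 0 => F
  | t + 1 => WLColor F t × Multiset (WLColor F t)

/-- The WL coloring of a graph `G` with node features `X` at iteration `t`:
`c_v^(0) = hash X_v` and `c_v^(t) = hash (c_v^(t-1), {{c_w^(t-1) | w ∈ N(v)}})`,
with the injective hash realized by pairing. -/
def wl {V F : Type*} [Fintype V] (G : SimpleGraph V) [DecidableRel G.Adj] (X : V → F) :
    (t : ℕ) → V → WLColor F t
  | 0 => X
  | t + 1 => fun v => (wl G X t v, (G.neighborFinset v).val.map (wl G X t))


/-- Two graphs `G¹`, `G²` are indistinguishable by the Weisfeiler-Leman test if they have the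
same multiset of node features and any two nodes of `V¹ ∪ V²` with equal features have equal
multisets of neighbor features.  More precisely, at every iteration `t` of WL any two nodes
with equal features receive the same color, and the multisets of colors over the two graphs
coincide (so the graphs are indistinguishable by WL). -/
theorem wl_indistinguishable_of_feature_homogeneous {V₁ V₂ F : Type*}
    [Fintype V₁] [Fintype V₂]
    (G₁ : SimpleGraph V₁) [DecidableRel G₁.Adj] (G₂ : SimpleGraph V₂) [DecidableRel G₂.Adj]
    (X₁ : V₁ → F) (X₂ : V₂ → F)
    (hX : (Finset.univ.val.map X₁) = (Finset.univ.val.map X₂))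
    (hN : ∀ i j : V₁ ⊕ V₂,
      Sum.elim X₁ X₂ i = Sum.elim X₁ X₂ j →
      Sum.elim (fun v => (G₁.neighborFinset v).val.map X₁)
          (fun v => (G₂.neighborFinset v).val.map X₂) i =
        Sum.elim (fun v => (G₁.neighborFinset v).val.map X₁)
          (fun v => (G₂.neighborFinset v).val.map X₂) j) :
    ∀ t : ℕ,
      (∀ i j : V₁ ⊕ V₂, Sum.elim X₁ X₂ i = Sum.elim X₁ X₂ j →
        Sum.elim (wl G₁ X₁ t) (wl G₂ X₂ t) i = Sum.elim (wl G₁ X₁ t) (wl G₂ X₂ t) j) ∧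
      (Finset.univ.val.map (wl G₁ X₁ t)) = (Finset.univ.val.map (wl G₂ X₂ t)) := by
  intro t
  induction t with
  | zero => exact ⟨fun i j h => h, hX⟩
  | succ t ih =>
    obtain ⟨ih1, ih2⟩ := ih
    by_cases hne : Nonempty (V₁ ⊕ V₂)
    · obtain ⟨i0⟩ := hne
      set c : V₁ ⊕ V₂ → WLColor F t := Sum.elim (wl G₁ X₁ t) (wl G₂ X₂ t) with hc
      set nf : V₁ ⊕ V₂ → Multiset F :=
        Sum.elim (fun v => (G₁.neighborFinset v).val.map X₁)
          (fun v => (G₂.neighborFinset v).val.map X₂) with hnf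
      have hftc : Function.FactorsThrough c (Sum.elim X₁ X₂) := fun a b hab => ih1 a b hab
      have hftn : Function.FactorsThrough nf (Sum.elim X₁ X₂) := fun a b hab => hN a b hab
      set g : F → WLColor F t := Function.extend (Sum.elim X₁ X₂) c (fun _ => c i0) with hg
      set h : F → Multiset F := Function.extend (Sum.elim X₁ X₂) nf (fun _ => nf i0) with hh
      have hcg : ∀ k, c k = g (Sum.elim X₁ X₂ k) := fun k => (hftc.extend_apply _ k).symm
      have hnh : ∀ k, nf k = h (Sum.elim X₁ X₂ k) := fun k => (hftn.extend_apply _ k).symm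
      set Gf : F → WLColor F (t + 1) := fun x => (g x, (h x).map g) with hGf
      have h1 : ∀ v : V₁, wl G₁ X₁ (t + 1) v = Gf (X₁ v) := by
        intro v
        show (wl G₁ X₁ t v, (G₁.neighborFinset v).val.map (wl G₁ X₁ t)) = _
        have e1 : wl G₁ X₁ t v = g (X₁ v) := hcg (Sum.inl v)
        have e2 : (G₁.neighborFinset v).val.map (wl G₁ X₁ t)
            = ((G₁.neighborFinset v).val.map X₁).map g := by
          rw [Multiset.map_map]
          exact Multiset.map_congr rfl fun w _ => hcg (Sum.inl w)
        have e3 : (G₁.neighborFinset v).val.map X₁ = h (X₁ v) := hnh (Sum.inl v)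
        rw [hGf]; dsimp only; rw [e1, e2, e3]
      have h2 : ∀ v : V₂, wl G₂ X₂ (t + 1) v = Gf (X₂ v) := by
        intro v
        show (wl G₂ X₂ t v, (G₂.neighborFinset v).val.map (wl G₂ X₂ t)) = _
        have e1 : wl G₂ X₂ t v = g (X₂ v) := hcg (Sum.inr v)
        have e2 : (G₂.neighborFinset v).val.map (wl G₂ X₂ t)
            = ((G₂.neighborFinset v).val.map X₂).map g := by
          rw [Multiset.map_map]
          exact Multiset.map_congr rfl fun w _ => hcg (Sum.inr w)
        have e3 : (G₂.neighborFinset v).val.map X₂ = h (X₂ v) := hnh (Sum.inr v)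
        rw [hGf]; dsimp only; rw [e1, e2, e3]
      refine ⟨?_, ?_⟩
      · rintro (i | i) (j | j) hij <;>
          simp only [Sum.elim_inl, Sum.elim_inr] at hij ⊢ <;>
          simp only [h1, h2, hij]
      · have m1 : (Finset.univ.val.map (wl G₁ X₁ (t + 1)))
            = (Finset.univ.val.map X₁).map Gf := by
          rw [Multiset.map_map]
          exact Multiset.map_congr rfl fun v _ => h1 v
        have m2 : (Finset.univ.val.map (wl G₂ X₂ (t + 1)))
            = (Finset.univ.val.map X₂).map Gf := by
          rw [Multiset.map_map]
          exact Multiset.map_congr rfl fun v _ => h2 v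
        rw [m1, m2, hX]
    · have hE : IsEmpty (V₁ ⊕ V₂) := not_nonempty_iff.mp hne
      have hE1 : IsEmpty V₁ := ⟨fun v => hE.false (Sum.inl v)⟩
      have hE2 : IsEmpty V₂ := ⟨fun v => hE.false (Sum.inr v)⟩
      refine ⟨fun i => hE.elim i, ?_⟩
      simp [Finset.univ_eq_empty]
end

section
/- If two nodes in (possibly different) graphs with identical node feature multisets satisfy that equal-featured nodes have equal multisets of neighbor features, then by induction on t, equal-featured nodes have equal WL colors at every iteration t. -/
/-- If the nodes of two graphs (with feature map `X` on `V¹ ∪ V²`) satisfy that equal-featured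
nodes have equal multisets of neighbor features, then (by induction on `t`) equal-featured
nodes have equal WL colors at every iteration `t`. -/
theorem wl_color_eq_of_feature_eq {V₁ V₂ F : Type*} [Fintype V₁] [Fintype V₂]
    (G₁ : SimpleGraph V₁) [DecidableRel G₁.Adj] (G₂ : SimpleGraph V₂) [DecidableRel G₂.Adj]
    (X₁ : V₁ → F) (X₂ : V₂ → F)
    (hN : ∀ i j : V₁ ⊕ V₂,
      Sum.elim X₁ X₂ i = Sum.elim X₁ X₂ j →
      Sum.elim (fun v => (G₁.neighborFinset v).val.map X₁)
          (fun v => (G₂.neighborFinset v).val.map X₂) i =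
        Sum.elim (fun v => (G₁.neighborFinset v).val.map X₁)
          (fun v => (G₂.neighborFinset v).val.map X₂) j) :
    ∀ (t : ℕ) (i j : V₁ ⊕ V₂), Sum.elim X₁ X₂ i = Sum.elim X₁ X₂ j →
      Sum.elim (wl G₁ X₁ t) (wl G₂ X₂ t) i = Sum.elim (wl G₁ X₁ t) (wl G₂ X₂ t) j := by
  intro t
  induction t with
  | zero => intro i j h; exact h
  | succ t ih =>
    intro i j h
    set c : V₁ ⊕ V₂ → WLColor F t := Sum.elim (wl G₁ X₁ t) (wl G₂ X₂ t) with hc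
    set f : V₁ ⊕ V₂ → F := Sum.elim X₁ X₂ with hf
    classical
    -- g sends a feature to the wl-color of some node having that feature
    set g : F → Option (WLColor F t) :=
      fun x => if h : ∃ n, f n = x then some (c h.choose) else none with hgdef
    have hg : ∀ n, g (f n) = some (c n) := by
      intro n
      have hex : ∃ m, f m = f n := ⟨n, rfl⟩
      simp only [hgdef, dif_pos hex]
      exact congrArg some (ih hex.choose n hex.choose_spec)
    have hmap : ∀ n : V₁ ⊕ V₂,
        (Sum.elim (fun v => (G₁.neighborFinset v).val.map (wl G₁ X₁ t))
          (fun v => (G₂.neighborFinset v).val.map (wl G₂ X₂ t)) n).map some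
        = (Sum.elim (fun v => (G₁.neighborFinset v).val.map X₁)
          (fun v => (G₂.neighborFinset v).val.map X₂) n).map g := by
      intro n
      cases n with
      | inl v =>
        simp only [Sum.elim_inl, Multiset.map_map]
        refine Multiset.map_congr rfl fun w _ => ?_
        exact (hg (Sum.inl w)).symm
      | inr v =>
        simp only [Sum.elim_inr, Multiset.map_map]
        refine Multiset.map_congr rfl fun w _ => ?_
        exact (hg (Sum.inr w)).symm
    have hNeq := hN i j h
    have hnbr : Sum.elim (fun v => (G₁.neighborFinset v).val.map (wl G₁ X₁ t))
          (fun v => (G₂.neighborFinset v).val.map (wl G₂ X₂ t)) i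
        = Sum.elim (fun v => (G₁.neighborFinset v).val.map (wl G₁ X₁ t))
          (fun v => (G₂.neighborFinset v).val.map (wl G₂ X₂ t)) j := by
      apply Multiset.map_injective (Option.some_injective _)
      rw [hmap i, hmap j, hNeq]
    have hcij : c i = c j := ih i j h
    cases i with
    | inl v =>
      cases j with
      | inl w =>
        show (wl G₁ X₁ t v, _) = (wl G₁ X₁ t w, _)
        exact Prod.ext hcij hnbr
      | inr w =>
        show (wl G₁ X₁ t v, _) = (wl G₂ X₂ t w, _)
        exact Prod.ext hcij hnbr
    | inr v =>
      cases j with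
      | inl w =>
        show (wl G₂ X₂ t v, _) = (wl G₁ X₁ t w, _)
        exact Prod.ext hcij hnbr
      | inr w =>
        show (wl G₂ X₂ t v, _) = (wl G₂ X₂ t w, _)
        exact Prod.ext hcij hnbr
end

section
/- Let g be a reversible additive graph augmentation function. Then g-WL (running WL on g(G)) is not less powerful than WL: any two graphs distinguishable by WL are also distinguishable by g-WL. In particular, the restriction to original vertices of the g-WL coloring at iteration t refines the WL coloring at iteration t on the original graph. -/
variable {V₁ W₁ V₂ W₂ F F' : Type*}

/-- `g` is additive: the augmented graph (on vertex set `V ⊕ W`, the original vertices plus the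
added ones) contains all original edges. -/
def AdditiveAug {V W : Type*} (G : SimpleGraph V) (G' : SimpleGraph (V ⊕ W)) : Prop :=
  ∀ u v : V, G.Adj u v → G'.Adj (Sum.inl u) (Sum.inl v)

/-- `g` is reversible (feature part): `h` recovers the original feature on original vertices and
returns `⊥` (here `none`) on added vertices. -/
def RevFeat {V W : Type*} (X : V → F) (X' : V ⊕ W → F') (h : F' → Option F) : Prop :=
  (∀ v : V, h (X' (Sum.inl v)) = some (X v)) ∧ (∀ w : W, h (X' (Sum.inr w)) = none)

/-- `g` is reversible (edge part): for every edge of the augmented graph, `ε` applied to the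
endpoint features tells whether it is an original edge. -/
def RevEdge {V W : Type*} (G : SimpleGraph V) (G' : SimpleGraph (V ⊕ W)) (X' : V ⊕ W → F')
    (ε : F' → F' → Bool) : Prop :=
  ∀ a b : V ⊕ W, G'.Adj a b →
    (ε (X' a) (X' b) = true ↔ ∃ u v : V, a = Sum.inl u ∧ b = Sum.inl v ∧ G.Adj u v)

/-!
A WL color remembers the initial feature of its vertex, so a color of the augmented graph
determines, through `hdec`, whether its vertex is original, and, through `ε` applied to the
initial features of a vertex and a neighbor, whether the edge between them is original.
Recursively discarding added vertices and added edges therefore decodes the `g`-WL color of an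
original vertex into its WL color, and decoding the multiset of all `g`-WL colors recovers the
multiset of all WL colors.
-/

namespace WLColor

variable {F F' : Type*}

def base : {t : ℕ} → WLColor F t → F
  | 0, c => c
  | _ + 1, c => base c.1

def decode (hdec : F' → Option F) (ε : F' → F' → Bool) :
    {t : ℕ} → WLColor F' t → Option (WLColor F t)
  | 0, c => hdec c
  | _ + 1, c =>
    (decode hdec ε c.1).map fun c₀ =>
      (c₀, c.2.filterMap fun d => if ε (base c.1) (base d) then decode hdec ε d else none)

theorem decode_eq_none_iff (hdec : F' → Option F) (ε : F' → F' → Bool) :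
    {t : ℕ} → (c : WLColor F' t) → decode hdec ε c = none ↔ hdec c.base = none
  | 0, _ => Iff.rfl
  | _ + 1, c => Option.map_eq_none_iff.trans (decode_eq_none_iff hdec ε c.1)

end WLColor

open WLColor

theorem base_wl {V F : Type*} [Fintype V] (G : SimpleGraph V) [DecidableRel G.Adj] (X : V → F) :
    ∀ (t : ℕ) (v : V), (wl G X t v).base = X v
  | 0, _ => rfl
  | t + 1, v => base_wl G X t v

theorem Multiset.filterMap_const_none {α β : Type*} (s : Multiset α) :
    s.filterMap (fun _ => (none : Option β)) = 0 :=
  Quot.inductionOn s fun _ => by simp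

section Augmentation

variable {V W F F' : Type*} [Fintype V] [Fintype W]
  {G : SimpleGraph V} [DecidableRel G.Adj] {X : V → F}
  {G' : SimpleGraph (V ⊕ W)} [DecidableRel G'.Adj] {X' : V ⊕ W → F'}
  {hdec : F' → Option F} {ε : F' → F' → Bool}

theorem RevEdge.filter_neighborFinset_inl (hadd : AdditiveAug G G') (hre : RevEdge G G' X' ε)
    (v : V) :
    (G'.neighborFinset (Sum.inl v)).filter (fun a => ε (X' (Sum.inl v)) (X' a) = true) =
      (G.neighborFinset v).map Function.Embedding.inl := by
  ext a
  simp only [Finset.mem_filter, SimpleGraph.mem_neighborFinset, Finset.mem_map,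
    Function.Embedding.inl_apply]
  constructor
  · rintro ⟨hadj, hε⟩
    obtain ⟨v', u, hv, rfl, hvu⟩ := (hre _ _ hadj).mp hε
    obtain rfl := Sum.inl_injective hv
    exact ⟨u, hvu, rfl⟩
  · rintro ⟨u, hvu, rfl⟩
    exact ⟨hadd v u hvu, (hre _ _ (hadd v u hvu)).mpr ⟨v, u, rfl, rfl, hvu⟩⟩

theorem decode_wl_inr (hrf : RevFeat X X' hdec) (t : ℕ) (w : W) :
    decode hdec ε (wl G' X' t (Sum.inr w)) = none := by
  rw [decode_eq_none_iff, base_wl]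
  exact hrf.2 w

theorem decode_wl_inl (hadd : AdditiveAug G G') (hrf : RevFeat X X' hdec)
    (hre : RevEdge G G' X' ε) : ∀ (t : ℕ) (v : V),
    decode hdec ε (wl G' X' t (Sum.inl v)) = some (wl G X t v)
  | 0, v => hrf.1 v
  | t + 1, v => by
    have ih : decode hdec ε ∘ wl G' X' t ∘ Sum.inl = some ∘ wl G X t :=
      funext (decode_wl_inl hadd hrf hre t)
    have neighbors :
        ((G'.neighborFinset (Sum.inl v)).val.map (wl G' X' t)).filterMap
          (fun d => if ε (wl G' X' t (Sum.inl v)).base d.base then decode hdec ε d else none) =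
        (G.neighborFinset v).val.map (wl G X t) := by
      simp only [Multiset.filterMap_map, Function.comp_def, base_wl]
      rw [← Multiset.filterMap_filter, ← Finset.filter_val,
        hre.filter_neighborFinset_inl hadd v, Finset.map_val, Multiset.filterMap_map]
      change Multiset.filterMap (decode hdec ε ∘ wl G' X' t ∘ Sum.inl) _ = _
      rw [ih, Multiset.filterMap_eq_map]
    exact congrArg₂ (fun o m => Option.map (fun c₀ => (c₀, m)) o)
      (decode_wl_inl hadd hrf hre t v) neighbors

theorem filterMap_decode_map_wl_univ (hadd : AdditiveAug G G') (hrf : RevFeat X X' hdec)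
    (hre : RevEdge G G' X' ε) (t : ℕ) :
    (Finset.univ.val.map (wl G' X' t)).filterMap (decode hdec ε) =
      Finset.univ.val.map (wl G X t) := by
  have inl : decode hdec ε ∘ wl G' X' t ∘ Sum.inl = some ∘ wl G X t :=
    funext (decode_wl_inl hadd hrf hre t)
  have inr : decode hdec ε ∘ wl G' X' t ∘ Sum.inr = fun _ : W => none :=
    funext (decode_wl_inr hrf t)
  rw [Multiset.filterMap_map, ← Finset.univ_disjSum_univ, Finset.val_disjSum,
    Multiset.disjSum, Multiset.filterMap_add, Multiset.filterMap_map, Multiset.filterMap_map,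
    Function.comp_assoc, Function.comp_assoc, inl, inr, Multiset.filterMap_eq_map,
    Multiset.filterMap_const_none, add_zero]

end Augmentation

/-- Let `g` be a reversible additive graph augmentation (here given by its action on two graphs,
with the same decoding functions `hdec`, `ε`).  Then `g`-WL is not less powerful than WL:
the restriction to original vertices of the `g`-WL coloring at iteration `t` refines the WL
coloring at iteration `t` on the original graph (uniformly for both graphs, and with added
vertices recognizable); consequently, if WL distinguishes the two graphs then `g`-WL does. -/
theorem reversible_augmentation_not_less_powerful
    [Fintype V₁] [Fintype W₁] [Fintype V₂] [Fintype W₂]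
    (G₁ : SimpleGraph V₁) [DecidableRel G₁.Adj] (X₁ : V₁ → F)
    (G₂ : SimpleGraph V₂) [DecidableRel G₂.Adj] (X₂ : V₂ → F)
    (G₁' : SimpleGraph (V₁ ⊕ W₁)) [DecidableRel G₁'.Adj] (X₁' : V₁ ⊕ W₁ → F')
    (G₂' : SimpleGraph (V₂ ⊕ W₂)) [DecidableRel G₂'.Adj] (X₂' : V₂ ⊕ W₂ → F')
    (hdec : F' → Option F) (ε : F' → F' → Bool)
    (hadd₁ : AdditiveAug G₁ G₁') (hadd₂ : AdditiveAug G₂ G₂')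
    (hrf₁ : RevFeat X₁ X₁' hdec) (hrf₂ : RevFeat X₂ X₂' hdec)
    (hre₁ : RevEdge G₁ G₁' X₁' ε) (hre₂ : RevEdge G₂ G₂' X₂' ε) :
    (∀ t : ℕ, ∃ h : WLColor F' t → Option (WLColor F t),
      (∀ v : V₁, h (wl G₁' X₁' t (Sum.inl v)) = some (wl G₁ X₁ t v)) ∧
      (∀ w : W₁, h (wl G₁' X₁' t (Sum.inr w)) = none) ∧
      (∀ v : V₂, h (wl G₂' X₂' t (Sum.inl v)) = some (wl G₂ X₂ t v)) ∧
      (∀ w : W₂, h (wl G₂' X₂' t (Sum.inr w)) = none)) ∧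
    ((∃ t : ℕ, (Finset.univ.val.map (wl G₁ X₁ t)) ≠ (Finset.univ.val.map (wl G₂ X₂ t))) →
      ∃ t : ℕ, (Finset.univ.val.map (wl G₁' X₁' t)) ≠ (Finset.univ.val.map (wl G₂' X₂' t))) := by
  refine ⟨fun t => ⟨decode hdec ε, decode_wl_inl hadd₁ hrf₁ hre₁ t, decode_wl_inr hrf₁ t,
    decode_wl_inl hadd₂ hrf₂ hre₂ t, decode_wl_inr hrf₂ t⟩, ?_⟩
  rintro ⟨t, hne⟩
  refine ⟨t, fun heq => hne ?_⟩
  rw [← filterMap_decode_map_wl_univ hadd₁ hrf₁ hre₁ t,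
    ← filterMap_decode_map_wl_univ hadd₂ hrf₂ hre₂ t, heq]
end

section
/- GR-WL is exactly as powerful as WL: augmenting a graph with a single virtual node connected to all vertices (with a fresh label α) does not change which pairs of non-isomorphic graphs WL can distinguish. -/
/-- A simple graph built from a boolean relation (symmetrized, loops removed). -/
def boolGraph {α : Type*} (r : α → α → Bool) : SimpleGraph α :=
  SimpleGraph.fromRel fun a b => r a b = true

instance {α : Type*} [DecidableEq α] (r : α → α → Bool) : DecidableRel (boolGraph r).Adj :=
  fun a b => decidable_of_iff _ (SimpleGraph.fromRel_adj _ a b).symm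

variable {V F : Type*}

/-- The relation underlying the graph-representation augmentation `GR(G)`: original adjacency,
plus a single virtual node adjacent to every original vertex. -/
def grRel (G : SimpleGraph V) [DecidableRel G.Adj] : (V ⊕ Unit) → (V ⊕ Unit) → Bool
  | Sum.inl u, Sum.inl v => decide (G.Adj u v)
  | Sum.inl _, Sum.inr _ => true
  | Sum.inr _, Sum.inl _ => true
  | Sum.inr _, Sum.inr _ => false

/-- The graph-representation augmented graph `GR(G)`: one virtual node connected to all
vertices. -/
def GRGraph (G : SimpleGraph V) [DecidableRel G.Adj] : SimpleGraph (V ⊕ Unit) :=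
  boolGraph (grRel G)

instance [DecidableEq V] (G : SimpleGraph V) [DecidableRel G.Adj] :
    DecidableRel (GRGraph G).Adj :=
  inferInstanceAs (DecidableRel (boolGraph (grRel G)).Adj)

/-- The features of `GR(G)`: original features on original vertices, a fresh label `α = none`
on the virtual node. -/
def grX (X : V → F) : (V ⊕ Unit) → Option F :=
  Sum.elim (fun v => some (X v)) (fun _ => none)

/-! ### Auxiliary machinery -/

lemma Multiset.filterMap_add' {α β : Type*} (f : α → Option β) (s t : Multiset α) :
    (s + t).filterMap f = s.filterMap f + t.filterMap f := by
  refine Multiset.induction_on s (by simp) ?_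
  intro a s ih
  rw [Multiset.cons_add]
  rcases h : f a with _ | b
  · rw [Multiset.filterMap_cons_none _ _ h, Multiset.filterMap_cons_none _ _ h, ih]
  · rw [Multiset.filterMap_cons_some _ _ _ h, Multiset.filterMap_cons_some _ _ _ h, ih,
      Multiset.cons_add]

lemma Multiset.filterMap_congr' {α β : Type*} {f g : α → Option β} (s : Multiset α)
    (h : ∀ a ∈ s, f a = g a) : s.filterMap f = s.filterMap g := by
  revert h
  refine Multiset.induction_on s (by simp) ?_
  intro a s ih h
  rcases hf : f a with _ | b
  · rw [Multiset.filterMap_cons_none _ _ hf,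
      Multiset.filterMap_cons_none _ _ (((h a (Multiset.mem_cons_self a s)).symm.trans hf)),
      ih fun x hx => h x (Multiset.mem_cons_of_mem hx)]
  · rw [Multiset.filterMap_cons_some _ _ _ hf,
      Multiset.filterMap_cons_some _ _ _ (((h a (Multiset.mem_cons_self a s)).symm.trans hf)),
      ih fun x hx => h x (Multiset.mem_cons_of_mem hx)]

lemma Multiset.filterMap_map_eq_map {α β γ : Type*} (f : α → β) (g : β → Option γ)
    (h : α → γ) (s : Multiset α) (H : ∀ a ∈ s, g (f a) = some (h a)) :
    (s.map f).filterMap g = s.map h := by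
  revert H
  refine Multiset.induction_on s (by simp) ?_
  intro a s ih H
  rw [Multiset.map_cons, Multiset.filterMap_cons_some _ _ _ (H a (Multiset.mem_cons_self a s)),
    Multiset.map_cons, ih fun x hx => H x (Multiset.mem_cons_of_mem hx)]

lemma grAdj_inl_inl [DecidableEq V] (G : SimpleGraph V) [DecidableRel G.Adj] (u v : V) :
    (GRGraph G).Adj (Sum.inl u) (Sum.inl v) ↔ G.Adj u v := by
  constructor
  · rintro ⟨-, h | h⟩
    · simpa [grRel] using h
    · exact ((by simpa [grRel] using h : G.Adj v u)).symm
  · intro h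
    exact ⟨by simpa using h.ne, Or.inl (by simp [grRel, h])⟩

lemma grAdj_inl_inr [DecidableEq V] (G : SimpleGraph V) [DecidableRel G.Adj] (v : V) (u : Unit) :
    (GRGraph G).Adj (Sum.inl v) (Sum.inr u) := ⟨by simp, Or.inl rfl⟩

lemma grAdj_inr_inr [DecidableEq V] (G : SimpleGraph V) [DecidableRel G.Adj] (u u' : Unit) :
    ¬ (GRGraph G).Adj (Sum.inr u) (Sum.inr u') := by
  rintro ⟨-, h | h⟩ <;> simp [grRel] at h

lemma nbrval_inl [Fintype V] [DecidableEq V] (G : SimpleGraph V) [DecidableRel G.Adj] (v : V) :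
    ((GRGraph G).neighborFinset (Sum.inl v)).val
      = (G.neighborFinset v).val.map Sum.inl + {Sum.inr ()} := by
  have h : (GRGraph G).neighborFinset (Sum.inl v) = (G.neighborFinset v).disjSum {()} := by
    ext x
    rcases x with w | u
    · simp [SimpleGraph.mem_neighborFinset, grAdj_inl_inl, (GRGraph G).adj_comm,
        G.adj_comm]
    · simp [SimpleGraph.mem_neighborFinset, ((GRGraph G).adj_comm _ _).mpr
        (grAdj_inl_inr G v u), grAdj_inl_inr]
  rw [h, Finset.val_disjSum]
  simp [Multiset.disjSum]

lemma nbrval_inr [Fintype V] [DecidableEq V] (G : SimpleGraph V) [DecidableRel G.Adj] (u : Unit) :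
    ((GRGraph G).neighborFinset (Sum.inr u)).val = Finset.univ.val.map Sum.inl := by
  have h : (GRGraph G).neighborFinset (Sum.inr u) = Finset.univ.disjSum (∅ : Finset Unit) := by
    ext x
    rcases x with w | u'
    · simp [SimpleGraph.mem_neighborFinset, ((GRGraph G).adj_comm _ _).mpr
        (grAdj_inl_inr G w u)]
    · simp [SimpleGraph.mem_neighborFinset, grAdj_inr_inr]
  rw [h, Finset.val_disjSum]
  simp [Multiset.disjSum]

lemma univ_val_sum [Fintype V] :
    (Finset.univ : Finset (V ⊕ Unit)).val = Finset.univ.val.map Sum.inl + {Sum.inr ()} := by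
  rw [← Finset.univ_disjSum_univ, Finset.val_disjSum]
  simp [Multiset.disjSum, Finset.univ_unique]

/-- Extracting the WL color of an original vertex from its GR-WL color; returns `none` on
colors of the virtual node. -/
def grToWL {F : Type*} : ∀ t, WLColor (Option F) t → Option (WLColor F t)
  | 0, c => c
  | t + 1, c => (grToWL t c.1).map (fun q => (q, c.2.filterMap (grToWL t)))

lemma grToWL_wl [Fintype V] [DecidableEq V] (G : SimpleGraph V) [DecidableRel G.Adj]
    (X : V → F) : ∀ t : ℕ,
    (∀ v, grToWL t (wl (GRGraph G) (grX X) t (Sum.inl v)) = some (wl G X t v)) ∧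
    (∀ u, grToWL t (wl (GRGraph G) (grX X) t (Sum.inr u)) = none) := by
  intro t
  induction t with
  | zero => exact ⟨fun v => rfl, fun u => rfl⟩
  | succ t ih =>
    constructor
    · intro v
      show (grToWL t (wl (GRGraph G) (grX X) t (Sum.inl v))).map _ = _
      rw [ih.1 v]
      show some (wl G X t v,
        (((GRGraph G).neighborFinset (Sum.inl v)).val.map
          (wl (GRGraph G) (grX X) t)).filterMap (grToWL t)) = _
      rw [nbrval_inl, Multiset.map_add, Multiset.map_map, Multiset.map_singleton,
        Multiset.filterMap_add',
        Multiset.filterMap_map_eq_map (wl (GRGraph G) (grX X) t ∘ Sum.inl) _ (wl G X t) _ (fun a _ => ih.1 a)]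
      rw [show ({wl (GRGraph G) (grX X) t (Sum.inr ())} : Multiset _)
          = (wl (GRGraph G) (grX X) t (Sum.inr ())) ::ₘ 0 from rfl]
      rw [Multiset.filterMap_cons_none _ _ (ih.2 ()), Multiset.filterMap_zero, add_zero]
      rfl
    · intro u
      show (grToWL t (wl (GRGraph G) (grX X) t (Sum.inr u))).map _ = _
      rw [ih.2 u]
      rfl

lemma wl_multiset_of_gr [Fintype V] [DecidableEq V] (G : SimpleGraph V) [DecidableRel G.Adj]
    (X : V → F) (t : ℕ) :
    (Finset.univ.val.map (wl (GRGraph G) (grX X) t)).filterMap (grToWL t)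
      = Finset.univ.val.map (wl G X t) := by
  rw [univ_val_sum, Multiset.map_add, Multiset.map_map, Multiset.map_singleton,
    Multiset.filterMap_add',
    Multiset.filterMap_map_eq_map (wl (GRGraph G) (grX X) t ∘ Sum.inl) _ (wl G X t) _ (fun a _ => (grToWL_wl G X t).1 a)]
  rw [show ({wl (GRGraph G) (grX X) t (Sum.inr ())} : Multiset _)
      = (wl (GRGraph G) (grX X) t (Sum.inr ())) ::ₘ 0 from rfl]
  rw [Multiset.filterMap_cons_none _ _ ((grToWL_wl G X t).2 ()), Multiset.filterMap_zero,
    add_zero]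

/-- Given the sequence of global WL color multisets, the function computing GR-WL colors of
original vertices from their WL colors, together with the GR-WL color of the virtual node. -/
def grPhi {F : Type*} (M : ∀ s : ℕ, Multiset (WLColor F s)) :
    ∀ t : ℕ, (WLColor F t → WLColor (Option F) t) × WLColor (Option F) t
  | 0 => (fun c => some c, none)
  | t + 1 =>
      ((fun c => ((grPhi M t).1 c.1, c.2.map (grPhi M t).1 + {(grPhi M t).2})),
       ((grPhi M t).2, (M t).map (grPhi M t).1))

lemma grPhi_spec [Fintype V] [DecidableEq V] (G : SimpleGraph V) [DecidableRel G.Adj]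
    (X : V → F) (M : ∀ s : ℕ, Multiset (WLColor F s))
    (h : ∀ s, Finset.univ.val.map (wl G X s) = M s) : ∀ t : ℕ,
    (∀ v, wl (GRGraph G) (grX X) t (Sum.inl v) = (grPhi M t).1 (wl G X t v)) ∧
    (∀ u, wl (GRGraph G) (grX X) t (Sum.inr u) = (grPhi M t).2) := by
  intro t
  induction t with
  | zero => exact ⟨fun v => rfl, fun u => rfl⟩
  | succ t ih =>
    constructor
    · intro v
      show (wl (GRGraph G) (grX X) t (Sum.inl v),
        ((GRGraph G).neighborFinset (Sum.inl v)).val.map (wl (GRGraph G) (grX X) t)) = _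
      rw [ih.1 v, nbrval_inl, Multiset.map_add, Multiset.map_map, Multiset.map_singleton,
        ih.2 ()]
      show _ = ((grPhi M t).1 (wl G X t v),
        ((G.neighborFinset v).val.map (wl G X t)).map (grPhi M t).1 + {(grPhi M t).2})
      rw [Multiset.map_map]
      congr 2
      exact Multiset.map_congr rfl fun a _ => ih.1 a
    · intro u
      show (wl (GRGraph G) (grX X) t (Sum.inr u),
        ((GRGraph G).neighborFinset (Sum.inr u)).val.map (wl (GRGraph G) (grX X) t)) = _
      rw [ih.2 u, nbrval_inr, Multiset.map_map]
      show _ = ((grPhi M t).2, (M t).map (grPhi M t).1)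
      congr 1
      rw [← h t, Multiset.map_map]
      exact Multiset.map_congr rfl fun a _ => ih.1 a

lemma gr_multiset [Fintype V] [DecidableEq V] (G : SimpleGraph V) [DecidableRel G.Adj]
    (X : V → F) (M : ∀ s : ℕ, Multiset (WLColor F s))
    (h : ∀ s, Finset.univ.val.map (wl G X s) = M s) (t : ℕ) :
    Finset.univ.val.map (wl (GRGraph G) (grX X) t)
      = (M t).map (grPhi M t).1 + {(grPhi M t).2} := by
  rw [univ_val_sum, Multiset.map_add, Multiset.map_map, Multiset.map_singleton,
    (grPhi_spec G X M h t).2 (), ← h t, Multiset.map_map]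
  congr 1
  exact Multiset.map_congr rfl fun a _ => (grPhi_spec G X M h t).1 a

/-- GR-WL is exactly as powerful as WL: augmenting a graph with a single virtual node connected
to all vertices (with a fresh label) does not change which pairs of graphs WL distinguishes. -/
theorem grwl_as_powerful_as_wl {V₁ V₂ : Type*} [Fintype V₁] [DecidableEq V₁]
    [Fintype V₂] [DecidableEq V₂]
    (G₁ : SimpleGraph V₁) [DecidableRel G₁.Adj] (X₁ : V₁ → F)
    (G₂ : SimpleGraph V₂) [DecidableRel G₂.Adj] (X₂ : V₂ → F) :
    (∃ t : ℕ, (Finset.univ.val.map (wl G₁ X₁ t)) ≠ (Finset.univ.val.map (wl G₂ X₂ t))) ↔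
    (∃ t : ℕ, (Finset.univ.val.map (wl (GRGraph G₁) (grX X₁) t)) ≠
        (Finset.univ.val.map (wl (GRGraph G₂) (grX X₂) t))) := by
  constructor
  · rintro ⟨t, hne⟩
    refine ⟨t, fun h => hne ?_⟩
    rw [← wl_multiset_of_gr G₁ X₁ t, ← wl_multiset_of_gr G₂ X₂ t, h]
  · rintro ⟨t, hne⟩
    by_contra hc
    push_neg at hc
    refine hne ?_
    rw [gr_multiset G₁ X₁ (fun s => Finset.univ.val.map (wl G₁ X₁ s)) (fun s => rfl) t,
      gr_multiset G₂ X₂ (fun s => Finset.univ.val.map (wl G₁ X₁ s)) (fun s => (hc s).symm) t]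
end

section
/- NF-WL is strictly more powerful than 2-WL for any fragmentation scheme that recovers a substructure with more than two nodes: (1) there exist non-isomorphic graphs with different counts of the substructure that 2-WL cannot distinguish but NF-WL can, and (2) since NF is a reversible augmentation, NF-WL distinguishes all pairs that 2-WL distinguishes. -/
/-- A representative of a finite graph structure: a number of nodes and an adjacency matrix. -/
def GraphRep : Type := Σ n : ℕ, Fin n → Fin n → Bool

/-- Two representatives are isomorphic if some equivalence of the vertices preserves
adjacency. -/
def repIso (a b : GraphRep) : Prop :=
  ∃ e : Fin a.1 ≃ Fin b.1, ∀ i j, a.2 i j = b.2 (e i) (e j)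

/-- Isomorphism classes of finite graph structures; the `type` of a fragment lives here. -/
def IsoClass : Type := Quot repIso

variable {V F : Type*}

/-- The type of a fragment `f` of a graph `G`: the isomorphism class of the induced
subgraph `G[f]`. -/
noncomputable def fragType [DecidableEq V] (G : SimpleGraph V) [DecidableRel G.Adj]
    (f : Finset V) : IsoClass :=
  Quot.mk _ ⟨f.card, fun i j => decide (G.Adj (f.equivFin.symm i : V) (f.equivFin.symm j : V))⟩

/-- The node features of `NF(G)`: the original feature concatenated with the multiset of types
of the fragments containing the node. -/
noncomputable def nfX [DecidableEq V] (G : SimpleGraph V) [DecidableRel G.Adj]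
    (Fr : Finset (Finset V)) (X : V → F) : V → F × Multiset IsoClass :=
  fun v => (X v, ((Fr.filter fun f => v ∈ f).val.map (fragType G)))

/-- The relation underlying `FR(G)`: original edges, and each fragment node is adjacent to the
nodes it contains. -/
def frRel [DecidableEq V] (G : SimpleGraph V) [DecidableRel G.Adj] (Fr : Finset (Finset V)) :
    (V ⊕ Fr) → (V ⊕ Fr) → Bool
  | Sum.inl u, Sum.inl v => decide (G.Adj u v)
  | Sum.inl v, Sum.inr f => decide (v ∈ (f : Finset V))
  | Sum.inr f, Sum.inl v => decide (v ∈ (f : Finset V))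
  | Sum.inr _, Sum.inr _ => false

/-- The fragment-representation augmented graph `FR(G)`. -/
def FRGraph [DecidableEq V] (G : SimpleGraph V) [DecidableRel G.Adj]
    (Fr : Finset (Finset V)) : SimpleGraph (V ⊕ Fr) :=
  boolGraph (frRel G Fr)

instance [DecidableEq V] (G : SimpleGraph V) [DecidableRel G.Adj] (Fr : Finset (Finset V)) :
    DecidableRel (FRGraph G Fr).Adj :=
  inferInstanceAs (DecidableRel (boolGraph (frRel G Fr)).Adj)

/-- The relation underlying `HLG(G)`: as `FR(G)`, plus edges between distinct intersecting
fragments. -/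
def hlgRel [DecidableEq V] (G : SimpleGraph V) [DecidableRel G.Adj] (Fr : Finset (Finset V)) :
    (V ⊕ Fr) → (V ⊕ Fr) → Bool
  | Sum.inl u, Sum.inl v => decide (G.Adj u v)
  | Sum.inl v, Sum.inr f => decide (v ∈ (f : Finset V))
  | Sum.inr f, Sum.inl v => decide (v ∈ (f : Finset V))
  | Sum.inr f, Sum.inr k => decide (f ≠ k) && decide (((f : Finset V) ∩ (k : Finset V)).Nonempty)

/-- The higher-level-graph augmentation `HLG(G)`. -/
def HLGGraph [DecidableEq V] (G : SimpleGraph V) [DecidableRel G.Adj]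
    (Fr : Finset (Finset V)) : SimpleGraph (V ⊕ Fr) :=
  boolGraph (hlgRel G Fr)

instance [DecidableEq V] (G : SimpleGraph V) [DecidableRel G.Adj] (Fr : Finset (Finset V)) :
    DecidableRel (HLGGraph G Fr).Adj :=
  inferInstanceAs (DecidableRel (boolGraph (hlgRel G Fr)).Adj)

/-- The node features of `FR(G)` and `HLG(G)`: original features on original vertices, the
fragment's type on fragment nodes. -/
noncomputable def frX [DecidableEq V] (G : SimpleGraph V) [DecidableRel G.Adj]
    (Fr : Finset (Finset V)) (X : V → F) : (V ⊕ Fr) → F ⊕ IsoClass :=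
  Sum.elim (fun v => Sum.inl (X v)) (fun f => Sum.inr (fragType G (f : Finset V)))

/-- A fragmentation scheme: for every finite graph, a set of fragments (node subsets). -/
def FragScheme : Type 1 :=
  (V : Type) → [Fintype V] → [DecidableEq V] → SimpleGraph V → Finset (Finset V)

/-- `f` is the node set of an induced copy of the pattern `S` in `G`. -/
def IsInducedCopy {s : ℕ} (S : SimpleGraph (Fin s)) {V : Type} [DecidableEq V]
    (G : SimpleGraph V) (f : Finset V) : Prop :=
  ∃ g : Fin s → V, Function.Injective g ∧ Finset.univ.image g = f ∧
    ∀ i j, S.Adj i j ↔ G.Adj (g i) (g j)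

/-- The scheme `𝓕` recovers the substructure `S`: every induced copy of `S` is a fragment. -/
def Recovers {s : ℕ} (𝓕 : FragScheme) (S : SimpleGraph (Fin s)) : Prop :=
  ∀ (V : Type) [Fintype V] [DecidableEq V] (G : SimpleGraph V) (f : Finset V),
    IsInducedCopy S G f → f ∈ 𝓕 V G

/-!
Part (1). With constant features, WL cannot tell apart two regular graphs of the same degree on
the same vertex set. On any three of its vertices, `S` or `Sᶜ` has a triangle or an induced
path `P₃`. For a pattern `T` with a triangle or an induced `P₃`, take `s + 1` copies of an
`s`-regular graph containing `T` against `s + 1` copies of `K_{s,s}` (no triangle) or `2s`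
copies of `K_{s+1}` (no induced `P₃`); complements handle `Sᶜ`. NF-WL separates the pair at
round `0`: summing the multiplicity of the type of `S` over all vertices counts every copy of
`S` exactly `s` times, and all of them are fragments.

Part (2). The NF features project onto the original ones, and WL colours commute with any map
applied to the initial features, so NF-WL refines WL.
-/

open SimpleGraph

namespace WLColor

variable {F' : Type*}

def map (φ : F → F') : (t : ℕ) → WLColor F t → WLColor F' t
  | 0, c => φ c
  | t + 1, (c, m) => ((map φ t c, m.map (map φ t)) : WLColor F' t × Multiset (WLColor F' t))

def const (x : F) (d : ℕ) : (t : ℕ) → WLColor F t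
  | 0 => x
  | t + 1 =>
    ((const x d t, Multiset.replicate d (const x d t)) : WLColor F t × Multiset (WLColor F t))

end WLColor

section WL

variable {F' : Type*} [Fintype V] (G : SimpleGraph V) [DecidableRel G.Adj]

theorem WLColor.map_wl (φ : F → F') (X : V → F) (t : ℕ) (v : V) :
    WLColor.map φ t (wl G X t v) = wl G (φ ∘ X) t v := by
  induction t generalizing v with
  | zero => rfl
  | succ t ih =>
    change ((WLColor.map φ t (wl G X t v), ((G.neighborFinset v).val.map (wl G X t)).map
      (WLColor.map φ t)) : WLColor F' t × Multiset (WLColor F' t)) =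
      (wl G (φ ∘ X) t v, (G.neighborFinset v).val.map (wl G (φ ∘ X) t))
    rw [Multiset.map_map, ih]
    exact congrArg _ (Multiset.map_congr rfl fun w _ => ih w)

theorem wl_const_of_isRegularOfDegree {d : ℕ} (hG : G.IsRegularOfDegree d) (x : F) (t : ℕ)
    (v : V) : wl G (fun _ => x) t v = WLColor.const x d t := by
  induction t generalizing v with
  | zero => rfl
  | succ t ih =>
    change ((wl G (fun _ => x) t v, (G.neighborFinset v).val.map (wl G (fun _ => x) t)) :
      WLColor F t × Multiset (WLColor F t)) = (WLColor.const x d t, _)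
    rw [ih, Multiset.map_congr rfl fun w _ => ih w, Multiset.map_const', Finset.card_val,
      card_neighborFinset_eq_degree, hG v]

theorem map_univ_wl_comp_eq {V₁ V₂ F' : Type*} [Fintype V₁] [Fintype V₂]
    {G₁ : SimpleGraph V₁} [DecidableRel G₁.Adj] {G₂ : SimpleGraph V₂} [DecidableRel G₂.Adj]
    {X₁ : V₁ → F} {X₂ : V₂ → F} (φ : F → F') {t : ℕ}
    (h : Finset.univ.val.map (wl G₁ X₁ t) = Finset.univ.val.map (wl G₂ X₂ t)) :
    Finset.univ.val.map (wl G₁ (φ ∘ X₁) t) = Finset.univ.val.map (wl G₂ (φ ∘ X₂) t) := by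
  have h' := congrArg (Multiset.map (WLColor.map φ t)) h
  simpa only [Multiset.map_map, Function.comp_def, WLColor.map_wl] using h'

theorem map_univ_wl_const_eq {G₁ G₂ : SimpleGraph V} [DecidableRel G₁.Adj]
    [DecidableRel G₂.Adj] {d : ℕ} (h₁ : G₁.IsRegularOfDegree d) (h₂ : G₂.IsRegularOfDegree d)
    (x : F) (t : ℕ) :
    Finset.univ.val.map (wl G₁ (fun _ => x) t) = Finset.univ.val.map (wl G₂ (fun _ => x) t) := by
  simp only [wl_const_of_isRegularOfDegree _ h₁, wl_const_of_isRegularOfDegree _ h₂]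

end WL

theorem repIso_equivalence : Equivalence repIso where
  refl _ := ⟨Equiv.refl _, fun _ _ => rfl⟩
  symm := fun ⟨e, he⟩ => ⟨e.symm, fun i j => by simpa using (he (e.symm i) (e.symm j)).symm⟩
  trans := fun ⟨e₁, h₁⟩ ⟨e₂, h₂⟩ => ⟨e₁.trans e₂, fun i j => (h₁ i j).trans (h₂ _ _)⟩

theorem IsoClass.mk_eq_mk_iff {a b : GraphRep} :
    (Quot.mk repIso a : IsoClass) = Quot.mk repIso b ↔ repIso a b :=
  Quot.eq.trans repIso_equivalence.eqvGen_iff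

def patternClass {s : ℕ} (S : SimpleGraph (Fin s)) [DecidableRel S.Adj] : IsoClass :=
  Quot.mk _ ⟨s, fun i j => decide (S.Adj i j)⟩

section InducedCopy

variable {s : ℕ} {S : SimpleGraph (Fin s)} {V : Type} [DecidableEq V] {G : SimpleGraph V}
  {f : Finset V}

theorem IsInducedCopy.card_eq (h : IsInducedCopy S G f) : f.card = s := by
  obtain ⟨g, hinj, rfl, -⟩ := h
  rw [Finset.card_image_of_injective _ hinj, Finset.card_univ, Fintype.card_fin]

theorem isInducedCopy_iff_exists_equiv :
    IsInducedCopy S G f ↔ ∃ e : Fin s ≃ f, ∀ i j, S.Adj i j ↔ G.Adj (e i) (e j) := by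
  constructor
  · rintro ⟨g, hinj, himg, hadj⟩
    have hrange : Set.range g = f := by simp [← himg]
    exact ⟨(Equiv.ofInjective g hinj).trans (Equiv.setCongr hrange), hadj⟩
  · rintro ⟨e, he⟩
    refine ⟨fun i => e i, Subtype.val_injective.comp e.injective, ?_, he⟩
    ext x
    simp only [Finset.mem_image, Finset.mem_univ, true_and]
    exact ⟨fun ⟨i, hi⟩ => hi ▸ (e i).2, fun hx => ⟨e.symm ⟨x, hx⟩, by simp⟩⟩

theorem exists_isInducedCopy_iff_isIndContained :
    (∃ f, IsInducedCopy S G f) ↔ S ⊴ G := by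
  constructor
  · rintro ⟨-, g, hinj, -, hadj⟩
    exact ⟨⟨⟨g, hinj⟩, (hadj _ _).symm⟩⟩
  · rintro ⟨φ⟩
    exact ⟨_, φ, φ.injective, rfl, fun _ _ => φ.map_adj_iff.symm⟩

open Finset in
theorem card_filter_isInducedCopy_pos_iff [Fintype V] [DecidablePred (IsInducedCopy S G)] :
    0 < #{f : Finset V | IsInducedCopy S G f} ↔ S ⊴ G := by
  simp [card_pos, filter_nonempty_iff, ← exists_isInducedCopy_iff_isIndContained]

theorem fragType_eq_patternClass_iff [DecidableRel S.Adj] [DecidableRel G.Adj] :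
    fragType G f = patternClass S ↔ IsInducedCopy S G f := by
  refine IsoClass.mk_eq_mk_iff.trans ?_
  rw [isInducedCopy_iff_exists_equiv]
  constructor
  · rintro ⟨e, he⟩
    refine ⟨e.symm.trans f.equivFin.symm, fun i j => ?_⟩
    simpa using (he (e.symm i) (e.symm j)).symm
  · rintro ⟨e, he⟩
    refine ⟨f.equivFin.symm.trans e.symm, fun i j => ?_⟩
    simp [he]

end InducedCopy

section Counting

open Finset

variable {s : ℕ} (S : SimpleGraph (Fin s))

open scoped Classical in
/-- Double counting: each induced copy of `S` is seen by its `s` vertices. -/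
theorem sum_count_patternClass_nfX {V : Type} [Fintype V] [DecidableEq V] (G : SimpleGraph V)
    [DecidableRel G.Adj] {Fr : Finset (Finset V)} (hFr : ∀ f, IsInducedCopy S G f → f ∈ Fr)
    (X : V → F) :
    ∑ v, (nfX G Fr X v).2.count (patternClass S) =
      s * #{f : Finset V | IsInducedCopy S G f} := by
  set C : Finset (Finset V) := {f | IsInducedCopy S G f}
  have hcount : ∀ v, (nfX G Fr X v).2.count (patternClass S) = #{f ∈ C | v ∈ f} := by
    intro v
    rw [nfX, Multiset.count_map, ← Finset.filter_val, Finset.card_val]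
    congr 1
    ext f
    simp only [mem_filter, mem_univ, true_and, C, eq_comm (a := patternClass S),
      fragType_eq_patternClass_iff]
    exact ⟨fun ⟨⟨_, hv⟩, hf⟩ => ⟨hf, hv⟩, fun ⟨hf, hv⟩ => ⟨⟨hFr f hf, hv⟩, hf⟩⟩
  calc ∑ v, (nfX G Fr X v).2.count (patternClass S)
      = ∑ v, #(C.bipartiteAbove (· ∈ ·) v) := Finset.sum_congr rfl fun v _ => hcount v
    _ = ∑ f ∈ C, #(univ.bipartiteBelow (· ∈ ·) f) :=
      sum_card_bipartiteAbove_eq_sum_card_bipartiteBelow _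
    _ = ∑ f ∈ C, s := Finset.sum_congr rfl fun f hf => by
      simpa [bipartiteBelow] using (mem_filter.mp hf).2.card_eq
    _ = s * #C := by rw [sum_const, smul_eq_mul, mul_comm]

open scoped Classical in
theorem card_isInducedCopy_eq_of_map_nfX_eq (hs : 0 < s) {V₁ V₂ : Type} [Fintype V₁]
    [DecidableEq V₁] [Fintype V₂] [DecidableEq V₂] {G₁ : SimpleGraph V₁} [DecidableRel G₁.Adj]
    {G₂ : SimpleGraph V₂} [DecidableRel G₂.Adj] {Fr₁ : Finset (Finset V₁)}
    {Fr₂ : Finset (Finset V₂)} (hFr₁ : ∀ f, IsInducedCopy S G₁ f → f ∈ Fr₁)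
    (hFr₂ : ∀ f, IsInducedCopy S G₂ f → f ∈ Fr₂) {X₁ : V₁ → F} {X₂ : V₂ → F}
    (h : univ.val.map (nfX G₁ Fr₁ X₁) = univ.val.map (nfX G₂ Fr₂ X₂)) :
    #{f : Finset V₁ | IsInducedCopy S G₁ f} = #{f : Finset V₂ | IsInducedCopy S G₂ f} := by
  have hsum := congrArg (fun m => (m.map fun p => p.2.count (patternClass S)).sum) h
  simp only [Multiset.map_map, Function.comp_def, ← Finset.sum_eq_multiset_sum,
    sum_count_patternClass_nfX S G₁ hFr₁, sum_count_patternClass_nfX S G₂ hFr₂] at hsum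
  exact Nat.eq_of_mul_eq_mul_left hs hsum

end Counting

namespace SimpleGraph

variable {α β W : Type*}

theorem IsRegularOfDegree.boxProd {G : SimpleGraph α} {H : SimpleGraph β}
    [G.LocallyFinite] [H.LocallyFinite] [(G □ H).LocallyFinite] {m n : ℕ}
    (hG : G.IsRegularOfDegree m) (hH : H.IsRegularOfDegree n) :
    (G □ H).IsRegularOfDegree (m + n) := fun x => by
  rw [degree_boxProd, hG, hH]

/-- For each `j` exactly one of `(j, false)`, `(j, true)` is adjacent to `(i, a)`, so the graph is
`|α|`-regular, and it contains `T` on each sheet `α × {a}`. -/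
def regularCover (T : SimpleGraph α) : SimpleGraph (α × Bool) where
  Adj p q := (p.2 = q.2 ↔ T.Adj p.1 q.1)
  symm := ⟨fun p q h => by rwa [eq_comm, T.adj_comm]⟩
  loopless := ⟨fun p h => T.loopless.irrefl p.1 (h.mp rfl)⟩

variable (T : SimpleGraph α)

@[simp]
theorem regularCover_adj {p q : α × Bool} :
    (regularCover T).Adj p q ↔ (p.2 = q.2 ↔ T.Adj p.1 q.1) :=
  Iff.rfl

def embeddingRegularCover (a : Bool) : T ↪g regularCover T where
  toFun i := (i, a)
  inj' _ _ := congrArg Prod.fst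
  map_rel_iff' {_ _} := iff_true_left rfl

theorem regularCover_isRegularOfDegree [Fintype α] [(regularCover T).LocallyFinite] :
    (regularCover T).IsRegularOfDegree (Fintype.card α) := by
  rintro ⟨i, a⟩
  rw [← card_neighborSet_eq_degree]
  refine Fintype.card_of_bijective (f := fun q : (regularCover T).neighborSet (i, a) => q.1.1)
    ⟨?_, fun j => ?_⟩
  · rintro ⟨⟨j, b⟩, hb⟩ ⟨⟨j', b'⟩, hb'⟩ (rfl : j = j')
    simp only [mem_neighborSet, regularCover_adj] at hb hb'
    ext <;> cases a <;> cases b <;> cases b' <;> simp_all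
  · classical
    exact ⟨⟨(j, if T.Adj i j then a else !a), by by_cases h : T.Adj i j <;> simp [h]⟩, rfl⟩

def HasInducedP3 (G : SimpleGraph V) : Prop :=
  ∃ x y z, G.Adj x y ∧ G.Adj y z ∧ ¬G.Adj x z ∧ x ≠ z

theorem HasInducedP3.of_isIndContained {G : SimpleGraph V} {H : SimpleGraph W}
    (hG : G.HasInducedP3) (h : G ⊴ H) : H.HasInducedP3 := by
  obtain ⟨x, y, z, hxy, hyz, hxz, hne⟩ := hG
  obtain ⟨φ⟩ := h
  exact ⟨φ x, φ y, φ z, φ.map_adj_iff.mpr hxy, φ.map_adj_iff.mpr hyz,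
    fun h => hxz (φ.map_adj_iff.mp h), φ.injective.ne hne⟩

theorem not_cliqueFree_three_of_adj {G : SimpleGraph V} {x y z : V} (hxy : G.Adj x y)
    (hxz : G.Adj x z) (hyz : G.Adj y z) : ¬G.CliqueFree 3 := by
  classical
  exact (is3Clique_triple_iff.mpr ⟨hxy, hxz, hyz⟩).not_cliqueFree

theorem triangle_or_inducedP3_of_adj {G : SimpleGraph V} {x y z : V} (hxz : x ≠ z)
    (hyz : y ≠ z) (hxy : G.Adj x y) :
    (¬G.CliqueFree 3 ∨ G.HasInducedP3) ∨ Gᶜ.HasInducedP3 := by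
  by_cases hx : G.Adj x z <;> by_cases hy : G.Adj y z
  · exact .inl (.inl (not_cliqueFree_three_of_adj hxy hx hy))
  · exact .inl (.inr ⟨z, x, y, hx.symm, hxy, fun h => hy h.symm, hyz.symm⟩)
  · exact .inl (.inr ⟨x, y, z, hxy, hy, hx, hxz⟩)
  · refine .inr ⟨x, z, y, ⟨hxz, hx⟩, ⟨hyz.symm, fun h => hy h.symm⟩, ?_, hxy.ne⟩
    exact fun h => h.2 hxy

theorem triangle_or_inducedP3_or_compl {G : SimpleGraph V} {x y z : V} (hxy : x ≠ y)
    (hxz : x ≠ z) (hyz : y ≠ z) :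
    (¬G.CliqueFree 3 ∨ G.HasInducedP3) ∨ (¬Gᶜ.CliqueFree 3 ∨ Gᶜ.HasInducedP3) := by
  by_cases h : G.Adj x y
  · exact (triangle_or_inducedP3_of_adj hxz hyz h).imp_right .inr
  · have := triangle_or_inducedP3_of_adj (G := Gᶜ) hxz hyz ⟨hxy, h⟩
    rw [compl_compl] at this
    exact this.symm.imp_left .inr

theorem cliqueFree_three_bot_boxProd_regularCover_bot :
    ((⊥ : SimpleGraph α) □ regularCover (⊥ : SimpleGraph β)).CliqueFree 3 := by
  have hcol : ((⊥ : SimpleGraph α) □ regularCover (⊥ : SimpleGraph β)).Coloring Bool :=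
    Coloring.mk (fun p => p.2.2) fun {p q} h => by
      rcases boxProd_adj.mp h with ⟨h, -⟩ | ⟨h, -⟩
      · exact h.elim
      · simpa using h
  exact hcol.colorable.cliqueFree (by simp)

theorem not_hasInducedP3_top_boxProd_bot :
    ¬((⊤ : SimpleGraph α) □ (⊥ : SimpleGraph β)).HasInducedP3 := by
  rintro ⟨x, y, z, hxy, hyz, hxz, hne⟩
  simp only [boxProd_adj, top_adj, bot_adj, false_and, or_false] at hxy hyz hxz
  exact hne (Prod.ext (not_not.mp fun h => hxz ⟨h, hxy.2.trans hyz.2⟩) (hxy.2.trans hyz.2))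

open scoped Classical in
/-- `⊥ □ regularCover ⊥` is `s + 1` copies of `K_{s,s}`, and `⊤ □ ⊥` is `2s` copies of `K_{s+1}`. -/
theorem exists_isRegularOfDegree_separating_of_triangle_or_inducedP3 {s : ℕ}
    (T : SimpleGraph (Fin s)) (hT : ¬T.CliqueFree 3 ∨ T.HasInducedP3) :
    ∃ G₁ G₂ : SimpleGraph (Fin (s + 1) × (Fin s × Bool)),
      G₁.IsRegularOfDegree s ∧ G₂.IsRegularOfDegree s ∧ T ⊴ G₁ ∧ ¬T ⊴ G₂ := by
  have hcopy : T ⊴ (⊥ □ regularCover T : SimpleGraph (Fin (s + 1) × _)) :=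
    ⟨(boxProdRight _ _ 0).comp (embeddingRegularCover T false)⟩
  have hreg₁ : (⊥ □ regularCover T : SimpleGraph (Fin (s + 1) × _)).IsRegularOfDegree s := by
    simpa using IsRegularOfDegree.bot.boxProd (regularCover_isRegularOfDegree T)
  rcases hT with htri | hp3
  · have hreg₂ : (⊥ □ regularCover (⊥ : SimpleGraph (Fin s)) :
        SimpleGraph (Fin (s + 1) × _)).IsRegularOfDegree s := by
      simpa using
        IsRegularOfDegree.bot.boxProd (regularCover_isRegularOfDegree (⊥ : SimpleGraph (Fin s)))
    refine ⟨⊥ □ regularCover T, ⊥ □ regularCover ⊥, by convert hreg₁, by convert hreg₂, hcopy,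
      fun h => htri ?_⟩
    exact cliqueFree_three_bot_boxProd_regularCover_bot.comap h.isContained
  · have hreg₂ : (⊤ □ ⊥ : SimpleGraph (Fin (s + 1) × (Fin s × Bool))).IsRegularOfDegree s := by
      simpa using (IsRegularOfDegree.top (V := Fin (s + 1))).boxProd
        (IsRegularOfDegree.bot (V := Fin s × Bool))
    refine ⟨⊥ □ regularCover T, ⊤ □ ⊥, by convert hreg₁, by convert hreg₂, hcopy, fun h => ?_⟩
    exact not_hasInducedP3_top_boxProd_bot (hp3.of_isIndContained h)

open scoped Classical in
theorem exists_isRegularOfDegree_separating {s : ℕ} (hs : 2 < s) (S : SimpleGraph (Fin s)) :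
    ∃ (G₁ G₂ : SimpleGraph (Fin (s + 1) × (Fin s × Bool))) (d : ℕ),
      G₁.IsRegularOfDegree d ∧ G₂.IsRegularOfDegree d ∧ S ⊴ G₁ ∧ ¬S ⊴ G₂ := by
  have h01 : (⟨0, by omega⟩ : Fin s) ≠ ⟨1, by omega⟩ := by simp
  have h02 : (⟨0, by omega⟩ : Fin s) ≠ ⟨2, by omega⟩ := by simp
  have h12 : (⟨1, by omega⟩ : Fin s) ≠ ⟨2, by omega⟩ := by simp
  rcases triangle_or_inducedP3_or_compl (G := S) h01 h02 h12 with hS | hSc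
  · obtain ⟨G₁, G₂, h₁, h₂, hS₁, hS₂⟩ :=
      exists_isRegularOfDegree_separating_of_triangle_or_inducedP3 S hS
    exact ⟨G₁, G₂, s, h₁, h₂, hS₁, hS₂⟩
  · obtain ⟨G₁, G₂, h₁, h₂, hS₁, hS₂⟩ :=
      exists_isRegularOfDegree_separating_of_triangle_or_inducedP3 Sᶜ hSc
    refine ⟨G₁ᶜ, G₂ᶜ, _, by convert h₁.compl, by convert h₂.compl, ?_, fun h => hS₂ ?_⟩
    · simpa using hS₁.compl
    · simpa using h.compl

end SimpleGraph

open scoped Classical in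
/-- NF-WL is strictly more powerful than 2-WL (the standard WL test) for any fragmentation
scheme recovering a substructure `S` with more than two nodes: (1) by the result of
Chen et al. (2020), there exist non-isomorphic graphs with different counts of induced copies
of `S` that WL cannot distinguish but NF-WL can; and (2) since `NF` is a reversible
augmentation, NF-WL distinguishes every pair of graphs that WL distinguishes. -/
theorem nfwl_strictly_more_powerful_than_wl {s : ℕ} (hs : 2 < s) (S : SimpleGraph (Fin s))
    (𝓕 : FragScheme) (hrec : Recovers 𝓕 S) :
    (∃ (V : Type) (_ : Fintype V) (_ : DecidableEq V)
        (G₁ : SimpleGraph V) (_ : DecidableRel G₁.Adj)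
        (G₂ : SimpleGraph V) (_ : DecidableRel G₂.Adj) (X₁ X₂ : V → Unit),
      (Finset.univ.filter fun f : Finset V => IsInducedCopy S G₁ f).card ≠
        (Finset.univ.filter fun f : Finset V => IsInducedCopy S G₂ f).card ∧
      (∀ t : ℕ, (Finset.univ.val.map (wl G₁ X₁ t)) = (Finset.univ.val.map (wl G₂ X₂ t))) ∧
      (∃ t : ℕ, (Finset.univ.val.map (wl G₁ (nfX G₁ (𝓕 V G₁) X₁) t)) ≠
          (Finset.univ.val.map (wl G₂ (nfX G₂ (𝓕 V G₂) X₂) t)))) ∧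
    (∀ (V₁ V₂ : Type) [Fintype V₁] [DecidableEq V₁] [Fintype V₂] [DecidableEq V₂]
      (G₁ : SimpleGraph V₁) [DecidableRel G₁.Adj] (G₂ : SimpleGraph V₂) [DecidableRel G₂.Adj]
      (X₁ : V₁ → Unit) (X₂ : V₂ → Unit),
      (∃ t : ℕ, (Finset.univ.val.map (wl G₁ X₁ t)) ≠ (Finset.univ.val.map (wl G₂ X₂ t))) →
      ∃ t : ℕ, (Finset.univ.val.map (wl G₁ (nfX G₁ (𝓕 V₁ G₁) X₁) t)) ≠
          (Finset.univ.val.map (wl G₂ (nfX G₂ (𝓕 V₂ G₂) X₂) t))) := by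
  refine ⟨?_, fun V₁ V₂ _ _ _ _ G₁ _ G₂ _ X₁ X₂ ⟨t, ht⟩ =>
    ⟨t, fun h => ht (map_univ_wl_comp_eq Prod.fst h)⟩⟩
  obtain ⟨G₁, G₂, d, h₁, h₂, hS₁, hS₂⟩ := exists_isRegularOfDegree_separating hs S
  have hcard : (Finset.univ.filter fun f => IsInducedCopy S G₁ f).card ≠
      (Finset.univ.filter fun f => IsInducedCopy S G₂ f).card := fun h =>
    hS₂ (card_filter_isInducedCopy_pos_iff.mp (h ▸ card_filter_isInducedCopy_pos_iff.mpr hS₁))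
  refine ⟨_, inferInstance, inferInstance, G₁, inferInstance, G₂, inferInstance, fun _ => (),
    fun _ => (), hcard, map_univ_wl_const_eq h₁ h₂ (), 0, fun h => hcard ?_⟩
  exact card_isInducedCopy_eq_of_map_nfX_eq S (by omega) (hrec _ G₁) (hrec _ G₂) h
end
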